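/- arXiv:2309.00388 — 5 statements merged into one kernel-verified Lean document; each statement's English description precedes it below -/
import Mathlib

section
/- Let p, q, B, s be real numbers with B > 0, p·s + q·s³ > 0, and s² < B. Let φ : ℝ → ℝ be defined by φ(t) = (p·t + q·t³)^(1/3). If the strong convexity condition φ(s) − s·φ'(s) + (B − s²)·φ''(s) > 0 holds at s, then p ≠ 0 and p·(4·p + 3·q·B) > 0; in particular 4·p + 3·q·B ≠ 0. -/
open Real

/-- For `φ(t) = (p·t + q·t³)^(1/3)` with `B > 0`, `p·s + q·s³ > 0`, `s² < B`,
if the strong convexity condition `φ(s) − s·φ'(s) + (B − s²)·φ''(s) > 0` holds at `s`,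
then `p ≠ 0` and `p·(4·p + 3·q·B) > 0`; in particular `4·p + 3·q·B ≠ 0`. -/
theorem cubic_phi_convexity_consequence (p q B s : ℝ) (hB : 0 < B)
    (h : 0 < p * s + q * s ^ 3) (hs : s ^ 2 < B)
    (hconv : 0 <
      (fun t : ℝ => (p * t + q * t ^ 3) ^ ((1 : ℝ) / 3)) s
        - s * deriv (fun t : ℝ => (p * t + q * t ^ 3) ^ ((1 : ℝ) / 3)) s
        + (B - s ^ 2) * deriv (deriv (fun t : ℝ => (p * t + q * t ^ 3) ^ ((1 : ℝ) / 3))) s) :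
    p ≠ 0 ∧ 0 < p * (4 * p + 3 * q * B) ∧ 4 * p + 3 * q * B ≠ 0 := by
  set u : ℝ → ℝ := fun t => p * t + q * t ^ 3 with hu_def
  have hu : ∀ t : ℝ, HasDerivAt u (p + 3 * q * t ^ 2) t := by
    intro t
    have h1 : HasDerivAt (fun t : ℝ => p * t) (p * 1) t := (hasDerivAt_id t).const_mul p
    have h2 : HasDerivAt (fun t : ℝ => q * t ^ 3) (q * (3 * t ^ 2)) t := by
      simpa using ((hasDerivAt_pow 3 t).const_mul q)
    exact (h1.add h2).congr_deriv (by ring)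
  have hcont : Continuous u := by fun_prop
  have hpos : ∀ᶠ t in nhds s, 0 < u t :=
    (hcont.tendsto s).eventually (eventually_gt_nhds h)
  -- first derivative
  set g : ℝ → ℝ := fun t => (1 : ℝ) / 3 * u t ^ ((1 : ℝ) / 3 - 1) * (p + 3 * q * t ^ 2)
    with hg_def
  have hf : ∀ t : ℝ, 0 < u t →
      HasDerivAt (fun t : ℝ => u t ^ ((1 : ℝ) / 3)) (g t) t := by
    intro t ht
    exact ((hu t).rpow_const (Or.inl ht.ne')).congr_deriv (by ring)
  have hEq : (deriv fun t : ℝ => u t ^ ((1 : ℝ) / 3)) =ᶠ[nhds s] g :=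
    hpos.mono fun t ht => (hf t ht).deriv
  have hd1 : deriv (fun t : ℝ => u t ^ ((1 : ℝ) / 3)) s = g s := (hf s h).deriv
  -- second derivative
  have hA : HasDerivAt (fun t : ℝ => u t ^ ((1 : ℝ) / 3 - 1))
      (((1 : ℝ) / 3 - 1) * u s ^ ((1 : ℝ) / 3 - 1 - 1) * (p + 3 * q * s ^ 2)) s :=
    ((hu s).rpow_const (Or.inl h.ne')).congr_deriv (by ring)
  have hv : HasDerivAt (fun t : ℝ => p + 3 * q * t ^ 2) (6 * q * s) s := by
    have h2 : HasDerivAt (fun t : ℝ => 3 * q * t ^ 2) (3 * q * (2 * s)) s := by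
      simpa using (hasDerivAt_pow 2 s).const_mul (3 * q)
    exact (h2.const_add p).congr_deriv (by ring)
  have hg : HasDerivAt g
      ((1 : ℝ) / 3 * ((((1 : ℝ) / 3 - 1) * u s ^ ((1 : ℝ) / 3 - 1 - 1) * (p + 3 * q * s ^ 2))
        * (p + 3 * q * s ^ 2) + u s ^ ((1 : ℝ) / 3 - 1) * (6 * q * s))) s := by
    have := (hA.mul hv).const_mul ((1 : ℝ) / 3)
    simpa [hg_def, mul_assoc] using this
  have hd2 : deriv (deriv fun t : ℝ => u t ^ ((1 : ℝ) / 3)) s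
      = (1 : ℝ) / 3 * ((((1 : ℝ) / 3 - 1) * u s ^ ((1 : ℝ) / 3 - 1 - 1) * (p + 3 * q * s ^ 2))
        * (p + 3 * q * s ^ 2) + u s ^ ((1 : ℝ) / 3 - 1) * (6 * q * s)) := by
    rw [Filter.EventuallyEq.deriv_eq hEq]
    exact hg.deriv
  -- rewrite powers
  have hU : (0:ℝ) < u s := h
  set A : ℝ := u s ^ ((1 : ℝ) / 3) with hA_def
  have hApos : 0 < A := Real.rpow_pos_of_pos hU _
  have hA3 : A ^ 3 = u s := by
    rw [hA_def, ← Real.rpow_natCast (u s ^ ((1:ℝ)/3)) 3, ← Real.rpow_mul hU.le]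
    norm_num
  have e1 : u s ^ ((1 : ℝ) / 3 - 1) = A / u s := by
    rw [Real.rpow_sub hU, Real.rpow_one, hA_def]
  have e2 : u s ^ ((1 : ℝ) / 3 - 1 - 1) = A / (u s) ^ 2 := by
    rw [Real.rpow_sub hU, Real.rpow_sub hU, Real.rpow_one, hA_def, sq, div_div]
  change 0 < A - s * deriv (fun t : ℝ => u t ^ ((1 : ℝ) / 3)) s
      + (B - s ^ 2) * deriv (deriv (fun t : ℝ => u t ^ ((1 : ℝ) / 3))) s at hconv
  simp only [hd1, hd2, e1, e2, hg_def] at hconv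
  -- hconv : 0 < A - s * (...) + (B - s^2) * (...)
  set U : ℝ := u s with hU_def
  have hUval : U = p * s + q * s ^ 3 := rfl
  have key : p ^ 2 * B < p * s ^ 2 * (4 * p + 3 * q * B) := by
    have hW : A - s * ((1:ℝ)/3 * (A / U) * (p + 3 * q * s ^ 2))
        + (B - s ^ 2) * ((1:ℝ)/3 * ((((1:ℝ)/3 - 1) * (A / U ^ 2) * (p + 3 * q * s ^ 2))
          * (p + 3 * q * s ^ 2) + (A / U) * (6 * q * s)))
        = A * (9 * U ^ 2 - 3 * s * U * (p + 3 * q * s ^ 2)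
            + (B - s ^ 2) * (18 * q * s * U - 2 * (p + 3 * q * s ^ 2) ^ 2)) / (9 * U ^ 2) := by
      have hUne : U ≠ 0 := ne_of_gt hU
      field_simp [hUne]
      ring
    rw [hW] at hconv
    have hU2 : (0:ℝ) < 9 * U ^ 2 := by positivity
    have hWpos : 0 < 9 * U ^ 2 - 3 * s * U * (p + 3 * q * s ^ 2)
        + (B - s ^ 2) * (18 * q * s * U - 2 * (p + 3 * q * s ^ 2) ^ 2) := by
      by_contra hc
      push_neg at hc
      have : A * (9 * U ^ 2 - 3 * s * U * (p + 3 * q * s ^ 2)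
            + (B - s ^ 2) * (18 * q * s * U - 2 * (p + 3 * q * s ^ 2) ^ 2)) / (9 * U ^ 2) ≤ 0 := by
        apply div_nonpos_of_nonpos_of_nonneg _ hU2.le
        exact mul_nonpos_of_nonneg_of_nonpos hApos.le hc
      linarith
    rw [hUval] at hWpos
    nlinarith [hWpos]
  have hs0 : s ≠ 0 := by rintro rfl; simp at h
  have hs2 : 0 < s ^ 2 := by positivity
  have hp : p ≠ 0 := by rintro rfl; norm_num at key
  have hp2B : 0 < p ^ 2 * B := by positivity
  have hpq : 0 < p * (4 * p + 3 * q * B) := by nlinarith [key, hp2B, hs2]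
  refine ⟨hp, hpq, fun h0 => ?_⟩
  rw [h0, mul_zero] at hpq
  exact lt_irrefl _ hpq
end

section
/- Let E be a real inner product space with inner product ⟪·,·⟫. Let b, k ∈ E, set B := ⟪b,b⟫ and f := ⟪b,k⟫, and assume B > 0. Let p, q, h be real numbers with p + q·B ≠ 0. Suppose that for every y ∈ E one has B·(4·p + 3·q·B)·⟪k,y⟫² − 4·(4·p + 3·q·B)·⟪b,y⟫·⟪k,y⟫·f + 4·p·⟪y,y⟫·f² = h·(p·B·⟪y,y⟫ − (4·p + 3·q·B)·⟪b,y⟫²). Then h = (8·p + 9·q·B)·f² / (3·B·(p + q·B)). -/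
open RealInnerProductSpace

/-! Evaluating the identity at `y = b`, where `⟪y, y⟫ = ⟪b, y⟫ = B` and `⟪k, y⟫ = f`, collapses it to
the linear equation `-B (8p + 9qB) f² = -3 h B² (p + qB)` in `h`. -/

theorem proportionality_factor_eq_of_eval_at_b {B f p q h : ℝ} (hB : B ≠ 0) (hpq : p + q * B ≠ 0)
    (H : B * (4 * p + 3 * q * B) * f ^ 2 - 4 * (4 * p + 3 * q * B) * B * f * f + 4 * p * B * f ^ 2
      = h * (p * B * B - (4 * p + 3 * q * B) * B ^ 2)) :
    h = (8 * p + 9 * q * B) * f ^ 2 / (3 * B * (p + q * B)) := by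
  rw [eq_div_iff (by positivity)]
  exact mul_left_cancel₀ hB (by linear_combination H)

/-- determination of the proportionality factor `h` (equation (4.11)). -/
theorem conformal_factor_h_value {E : Type*} [NormedAddCommGroup E] [InnerProductSpace ℝ E]
    (b k : E) (B f : ℝ) (hBdef : B = ⟪b, b⟫) (hfdef : f = ⟪b, k⟫) (hB : 0 < B)
    (p q h : ℝ) (hpq : p + q * B ≠ 0)
    (hyp : ∀ y : E,
      B * (4 * p + 3 * q * B) * ⟪k, y⟫ ^ 2
        - 4 * (4 * p + 3 * q * B) * ⟪b, y⟫ * ⟪k, y⟫ * f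
        + 4 * p * ⟪y, y⟫ * f ^ 2
      = h * (p * B * ⟪y, y⟫ - (4 * p + 3 * q * B) * ⟪b, y⟫ ^ 2)) :
    h = (8 * p + 9 * q * B) * f ^ 2 / (3 * B * (p + q * B)) := by
  have hyp_b := hyp b
  rw [real_inner_comm, ← hfdef, ← hBdef] at hyp_b
  exact proportionality_factor_eq_of_eval_at_b hB.ne' hpq hyp_b
end

section
/- Let E be a real inner product space with inner product ⟪·,·⟫. Let b, k ∈ E, set B := ⟪b,b⟫ and f := ⟪b,k⟫, and assume B > 0. Let p, q, h be real numbers with p + q·B ≠ 0 and 4·p + 3·q·B ≠ 0. Suppose that for every y ∈ E one has B·(4·p + 3·q·B)·⟪k,y⟫² − 4·(4·p + 3·q·B)·⟪b,y⟫·⟪k,y⟫·f + 4·p·⟪y,y⟫·f² = h·(p·B·⟪y,y⟫ − (4·p + 3·q·B)·⟪b,y⟫²). Then for every y ∈ E one has f·(f·⟪b,y⟫ − B·⟪k,y⟫) = 0. -/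
open RealInnerProductSpace

/-!
Move everything in the hypothesis to one side: a quadratic form in `y` vanishes identically, hence
so does its polarization. Evaluating the polarization at `b` and at a vector `w ⊥ b` gives
`B (4p + 3qB) f ⟪k, w⟫ = 0`. Every `y` yields such a `w := B • y - ⟪b, y⟫ • b`, and
`⟪k, w⟫ = B ⟪k, y⟫ - f ⟪b, y⟫`.
-/

section

variable {E : Type*} [NormedAddCommGroup E] [InnerProductSpace ℝ E]

theorem inner_smul_sub_smul_eq_zero (b y : E) : ⟪b, ⟪b, b⟫ • y - ⟪b, y⟫ • b⟫ = 0 := by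
  rw [inner_sub_right, real_inner_smul_right, real_inner_smul_right]
  ring

/-- The left side is twice the polarization of the form at `(b, v)`. -/
theorem mul_inner_eq_zero_of_quadratic_form_eq_zero (b k : E) (α β γ δ : ℝ)
    (hQ : ∀ y : E, α * ⟪k, y⟫ ^ 2 + β * ⟪b, y⟫ * ⟪k, y⟫ + γ * ⟪y, y⟫ + δ * ⟪b, y⟫ ^ 2 = 0)
    {v : E} (hv : ⟪b, v⟫ = 0) : (2 * α * ⟪b, k⟫ + β * ⟪b, b⟫) * ⟪k, v⟫ = 0 := by
  have hvb : ⟪v, b⟫ = 0 := by rw [real_inner_comm, hv]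
  have hplus := hQ (b + v)
  have hminus := hQ (b - v)
  simp only [inner_add_left, inner_add_right, inner_sub_left, inner_sub_right, hv, hvb,
    real_inner_comm b k] at hplus hminus
  linear_combination (hplus - hminus) / 2

end

theorem conformal_factor_eq_4_12_general {E : Type*} [NormedAddCommGroup E] [InnerProductSpace ℝ E]
    (b k : E) (B f : ℝ) (hBdef : B = ⟪b, b⟫) (hfdef : f = ⟪b, k⟫) (hB : 0 < B)
    (p q h : ℝ) (hpq' : 4 * p + 3 * q * B ≠ 0)
    (hyp : ∀ y : E,
      B * (4 * p + 3 * q * B) * ⟪k, y⟫ ^ 2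
        - 4 * (4 * p + 3 * q * B) * ⟪b, y⟫ * ⟪k, y⟫ * f
        + 4 * p * ⟪y, y⟫ * f ^ 2
      = h * (p * B * ⟪y, y⟫ - (4 * p + 3 * q * B) * ⟪b, y⟫ ^ 2)) :
    ∀ y : E, f * (f * ⟪b, y⟫ - B * ⟪k, y⟫) = 0 := by
  intro y
  set c := 4 * p + 3 * q * B
  have hQ : ∀ y : E, B * c * ⟪k, y⟫ ^ 2 + (-4 * c * f) * ⟪b, y⟫ * ⟪k, y⟫
      + (4 * p * f ^ 2 - h * p * B) * ⟪y, y⟫ + h * c * ⟪b, y⟫ ^ 2 = 0 :=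
    fun y => by linear_combination hyp y
  have hpolar := mul_inner_eq_zero_of_quadratic_form_eq_zero b k _ _ _ _ hQ
    (inner_smul_sub_smul_eq_zero b y)
  rw [inner_sub_right, real_inner_smul_right, real_inner_smul_right, real_inner_comm b k,
    ← hBdef, ← hfdef] at hpolar
  have hscaled : (2 * B * c) * (f * (f * ⟪b, y⟫ - B * ⟪k, y⟫)) = 0 := by
    linear_combination hpolar
  exact (mul_eq_zero.mp hscaled).resolve_left (mul_ne_zero (mul_ne_zero two_ne_zero hB.ne') hpq')

/-- equation (4.12): `f·(f·⟪b,y⟫ − B·⟪k,y⟫) = 0` for all `y`. -/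
theorem conformal_factor_eq_4_12 {E : Type*} [NormedAddCommGroup E] [InnerProductSpace ℝ E]
    (b k : E) (B f : ℝ) (hBdef : B = ⟪b, b⟫) (hfdef : f = ⟪b, k⟫) (hB : 0 < B)
    (p q h : ℝ) (hpq : p + q * B ≠ 0) (hpq' : 4 * p + 3 * q * B ≠ 0)
    (hyp : ∀ y : E,
      B * (4 * p + 3 * q * B) * ⟪k, y⟫ ^ 2
        - 4 * (4 * p + 3 * q * B) * ⟪b, y⟫ * ⟪k, y⟫ * f
        + 4 * p * ⟪y, y⟫ * f ^ 2
      = h * (p * B * ⟪y, y⟫ - (4 * p + 3 * q * B) * ⟪b, y⟫ ^ 2)) :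
    ∀ y : E, f * (f * ⟪b, y⟫ - B * ⟪k, y⟫) = 0 :=
  conformal_factor_eq_4_12_general b k B f hBdef hfdef hB p q h hpq' hyp
end

section
/- Let E be a real inner product space with inner product ⟪·,·⟫. Let b, k ∈ E, set B := ⟪b,b⟫ and f := ⟪b,k⟫, and assume B > 0. Let p, q, h be real numbers with p + q·B ≠ 0 and 4·p + 3·q·B ≠ 0. Suppose that for every y ∈ E one has B·(4·p + 3·q·B)·⟪k,y⟫² − 4·(4·p + 3·q·B)·⟪b,y⟫·⟪k,y⟫·f + 4·p·⟪y,y⟫·f² = h·(p·B·⟪y,y⟫ − (4·p + 3·q·B)·⟪b,y⟫²). If f = 0, then k = 0. -/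
open RealInnerProductSpace

/-- Evaluating at `b` forces the factor `h` to vanish; evaluating at `k` then gives
`A ⟪k, k⟫² = 0`. -/
theorem eq_zero_of_forall_mul_inner_sq_eq {E : Type*} [NormedAddCommGroup E]
    [InnerProductSpace ℝ E] {b k : E} {A h P C : ℝ} (hA : A ≠ 0) (hbk : ⟪b, k⟫ = 0)
    (hb : P * ⟪b, b⟫ - C * ⟪b, b⟫ ^ 2 ≠ 0)
    (hyp : ∀ y : E, A * ⟪k, y⟫ ^ 2 = h * (P * ⟪y, y⟫ - C * ⟪b, y⟫ ^ 2)) :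
    k = 0 := by
  have hkb : ⟪k, b⟫ = 0 := by rw [real_inner_comm, hbk]
  have hh : h = 0 := by
    have hRb := (hyp b).symm
    rw [hkb, zero_pow two_ne_zero, mul_zero] at hRb
    exact (mul_eq_zero.mp hRb).resolve_right hb
  have hkk := hyp k
  rw [hh, zero_mul] at hkk
  simpa [hA] using hkk

/-- Case I of the proof of the main theorem: if `f = 0` then `k = 0`. -/
theorem conformal_factor_case_I {E : Type*} [NormedAddCommGroup E] [InnerProductSpace ℝ E]
    (b k : E) (B f : ℝ) (hBdef : B = ⟪b, b⟫) (hfdef : f = ⟪b, k⟫) (hB : 0 < B)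
    (p q h : ℝ) (hpq : p + q * B ≠ 0) (hpq' : 4 * p + 3 * q * B ≠ 0)
    (hyp : ∀ y : E,
      B * (4 * p + 3 * q * B) * ⟪k, y⟫ ^ 2
        - 4 * (4 * p + 3 * q * B) * ⟪b, y⟫ * ⟪k, y⟫ * f
        + 4 * p * ⟪y, y⟫ * f ^ 2
      = h * (p * B * ⟪y, y⟫ - (4 * p + 3 * q * B) * ⟪b, y⟫ ^ 2))
    (hf : f = 0) :
    k = 0 := by
  subst hf
  refine eq_zero_of_forall_mul_inner_sq_eq (mul_ne_zero hB.ne' hpq') hfdef.symm ?_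
    (fun y => by simpa using hyp y)
  have hform : p * B * ⟪b, b⟫ - (4 * p + 3 * q * B) * ⟪b, b⟫ ^ 2
      = -3 * (p + q * B) * B ^ 2 := by
    rw [← hBdef]; ring
  rw [hform]
  exact mul_ne_zero (mul_ne_zero (by norm_num) hpq) (pow_ne_zero 2 hB.ne')
end

section
/- Let n ≥ 1 and let A be a homogeneous polynomial of degree 3 in n real variables that is not the cube of any homogeneous polynomial of degree 1 (up to equality of polynomials). Let θ be a homogeneous polynomial of degree 1, let μ be a real number, and let P, Q be polynomials in n real variables. Let U ⊆ ℝⁿ be a nonempty open set on which A(y) > 0 and Q(y) ≠ 0. If for every y ∈ U one has θ(y)·A(y)^(1/3) + μ·A(y)^(2/3) = P(y)/Q(y), then θ = 0 and μ = 0. -/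
open Real MvPolynomial

section Aux

lemma analytic_eval (n : ℕ) (p : MvPolynomial (Fin n) ℝ) :
    AnalyticOnNhd ℝ (fun y : Fin n → ℝ => MvPolynomial.eval y p) Set.univ := by
  induction p using MvPolynomial.induction_on with
  | C a => simpa using analyticOnNhd_const
  | add p q hp hq => simpa only [map_add, Pi.add_def] using hp.add hq
  | mul_X p i hp =>
      have hX : AnalyticOnNhd ℝ (fun y : Fin n → ℝ => y i) Set.univ :=
        (ContinuousLinearMap.proj i : (Fin n → ℝ) →L[ℝ] ℝ).analyticOnNhd _
      simpa using hp.mul hX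

lemma eq_zero_of_eval_zero_on_open {n : ℕ} (p : MvPolynomial (Fin n) ℝ)
    {U : Set (Fin n → ℝ)} (hU : IsOpen U) (hne : U.Nonempty)
    (h : ∀ y ∈ U, MvPolynomial.eval y p = 0) : p = 0 := by
  obtain ⟨y₀, hy₀⟩ := hne
  have hz : (fun y : Fin n → ℝ => MvPolynomial.eval y p) =ᶠ[nhds y₀] 0 := by
    filter_upwards [hU.mem_nhds hy₀] with y hy using h y hy
  have := (analytic_eval n p).eqOn_zero_of_preconnected_of_eventuallyEq_zero
    isPreconnected_univ (Set.mem_univ y₀) hz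
  apply MvPolynomial.funext
  intro x
  simpa using this (Set.mem_univ x)


lemma cube_norm_zero {F : Type*} [Field F] {A a b c : F} (hA : ∀ s : F, s ^ 3 ≠ A)
    (h : a^3*A^2 + b^3*A + c^3 = 3*a*b*c*A) : a = 0 ∧ b = 0 ∧ c = 0 := by
  have hirr : Irreducible (Polynomial.X ^ 3 - Polynomial.C A : (Polynomial F)) :=
    X_pow_sub_C_irreducible_of_prime Nat.prime_three hA
  haveI : Fact (Irreducible (Polynomial.X ^ 3 - Polynomial.C A : (Polynomial F))) := ⟨hirr⟩
  set p : (Polynomial F) := Polynomial.X ^ 3 - Polynomial.C A with hp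
  let K := AdjoinRoot p
  let i : F →+* K := algebraMap F K
  set r : K := AdjoinRoot.root p with hrdef
  have hr : r ^ 3 = i A := by
    have hself : (AdjoinRoot.mk p) p = 0 := AdjoinRoot.mk_self
    have h2 : (AdjoinRoot.mk p) (Polynomial.X ^ 3 - Polynomial.C A) = r ^ 3 - i A := by
      simp [AdjoinRoot.algebraMap_eq, AdjoinRoot.mk_X, map_sub, map_pow, i]
      rfl
    rw [← hp] at h2
    rw [hself] at h2
    linear_combination -h2
  have hmain : (i c + i b * r + i a * r ^ 2) *
      ((i c ^ 2 - i a * i b * i A) + (i a ^ 2 * i A - i b * i c) * r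
        + (i b ^ 2 - i a * i c) * r ^ 2) = 0 := by
    have him : i a ^3 * i A ^2 + i b ^3 * i A + i c ^3 = 3 * i a * i b * i c * i A := by
      have := congrArg i h
      push_cast [map_add, map_mul, map_pow, map_ofNat] at this
      convert this using 1 <;> push_cast [map_add, map_mul, map_pow, map_ofNat] <;> ring
    rw [← hr] at him ⊢
    linear_combination him
  -- helper to extract coefficients from a quadratic relation in r
  have key : ∀ x y z : F, i x + i y * r + i z * r ^ 2 = 0 → x = 0 ∧ y = 0 ∧ z = 0 := by
    intro x y z hxyz
    have hmk : (AdjoinRoot.mk p) (Polynomial.C x + Polynomial.C y * Polynomial.X + Polynomial.C z * Polynomial.X ^ 2) = 0 := by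
      simp only [map_add, map_mul, map_pow, AdjoinRoot.mk_X, AdjoinRoot.mk_C]; exact hxyz
    have hdvd : p ∣ (Polynomial.C x + Polynomial.C y * Polynomial.X + Polynomial.C z * Polynomial.X ^ 2) := (AdjoinRoot.mk_eq_zero).mp hmk
    have hq0 : (Polynomial.C x + Polynomial.C y * Polynomial.X + Polynomial.C z * Polynomial.X ^ 2 : (Polynomial F)) = 0 := by
      refine Polynomial.eq_zero_of_dvd_of_degree_lt hdvd ?_
      have hdegp : p.degree = 3 := by
        rw [hp]; exact_mod_cast Polynomial.degree_X_pow_sub_C (by norm_num) A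
      have : (Polynomial.C x + Polynomial.C y * Polynomial.X + Polynomial.C z * Polynomial.X ^ 2 : (Polynomial F)).degree ≤ 2 := by
        refine le_trans (Polynomial.degree_add_le _ _) ?_
        simp only [max_le_iff]
        constructor
        · refine le_trans (Polynomial.degree_add_le _ _) ?_
          simp only [max_le_iff]
          refine ⟨le_trans (Polynomial.degree_C_le) (by norm_num), ?_⟩
          · refine le_trans (Polynomial.degree_mul_le _ _) ?_
            calc (Polynomial.C y).degree + (Polynomial.X : (Polynomial F)).degree ≤ 0 + 1 := by
                  exact add_le_add Polynomial.degree_C_le (by simp)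
              _ ≤ 2 := by norm_num
        · refine le_trans (Polynomial.degree_mul_le _ _) ?_
          calc (Polynomial.C z).degree + (Polynomial.X ^ 2 : (Polynomial F)).degree ≤ 0 + 2 := by
                exact add_le_add Polynomial.degree_C_le (by simp)
            _ ≤ 2 := by norm_num
      rw [hdegp]
      exact lt_of_le_of_lt this (by norm_num)
    refine ⟨?_, ?_, ?_⟩
    · have := congrArg (fun q => Polynomial.coeff q 0) hq0
      simpa using this
    · have := congrArg (fun q => Polynomial.coeff q 1) hq0
      simpa using this
    · have := congrArg (fun q => Polynomial.coeff q 2) hq0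
      simpa [Polynomial.coeff_C] using this
  rcases mul_eq_zero.mp hmain with h1 | h2
  · obtain ⟨hc, hb, ha⟩ := key c b a h1
    exact ⟨ha, hb, hc⟩
  · have h2' : i (c^2 - a*b*A) + i (a^2*A - b*c) * r + i (b^2 - a*c) * r ^ 2 = 0 := by
      push_cast [map_sub, map_mul, map_pow] at h2 ⊢
      convert h2 using 2 <;> ring
    obtain ⟨h1', h2'', h3'⟩ := key _ _ _ h2'
    by_cases ha : a = 0
    · subst ha
      have hb : b = 0 := by
        have : b ^ 2 = 0 := by linear_combination h3'
        exact pow_eq_zero_iff (by norm_num) |>.mp this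
      subst hb
      have hc : c = 0 := by
        have : c ^ 2 = 0 := by linear_combination h1'
        exact pow_eq_zero_iff (by norm_num) |>.mp this
      exact ⟨rfl, rfl, hc⟩
    · exfalso
      apply hA (b / a)
      have hc : b ^ 2 = a * c := by linear_combination h3'
      field_simp
      linear_combination b * hc - a * h2''


variable {n : ℕ}

private lemma deg_add (a b : Fin n →₀ ℕ) : (a + b).degree = a.degree + b.degree := by
  simp [Finsupp.degree_eq_weight_one, map_add]

private lemma deg_le_total {p : MvPolynomial (Fin n) ℝ} {d : Fin n →₀ ℕ}
    (h : d ∈ p.support) : d.degree ≤ p.totalDegree := le_totalDegree h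

private lemma supp_mul_lb {p q : MvPolynomial (Fin n) ℝ} {a b : ℕ}
    (hp : ∀ d ∈ p.support, a ≤ d.degree) (hq : ∀ d ∈ q.support, b ≤ d.degree) :
    ∀ d ∈ (p * q).support, a + b ≤ d.degree := by
  classical
  intro d hd
  obtain ⟨d₁, h1, d₂, h2, rfl⟩ := Finset.mem_add.mp (support_mul p q hd)
  rw [deg_add]
  exact add_le_add (hp _ h1) (hq _ h2)

private lemma supp_mul_ub {p q : MvPolynomial (Fin n) ℝ} {a b : ℕ}
    (hp : ∀ d ∈ p.support, d.degree ≤ a) (hq : ∀ d ∈ q.support, d.degree ≤ b) :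
    ∀ d ∈ (p * q).support, d.degree ≤ a + b := by
  classical
  intro d hd
  obtain ⟨d₁, h1, d₂, h2, rfl⟩ := Finset.mem_add.mp (support_mul p q hd)
  rw [deg_add]
  exact add_le_add (hp _ h1) (hq _ h2)

private lemma supp_add_lb {p q : MvPolynomial (Fin n) ℝ} {a : ℕ}
    (hp : ∀ d ∈ p.support, a ≤ d.degree) (hq : ∀ d ∈ q.support, a ≤ d.degree) :
    ∀ d ∈ (p + q).support, a ≤ d.degree := by
  classical
  intro d hd
  rcases Finset.mem_union.mp (MvPolynomial.support_add hd) with h | h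
  exacts [hp _ h, hq _ h]

private lemma supp_add_ub {p q : MvPolynomial (Fin n) ℝ} {a : ℕ}
    (hp : ∀ d ∈ p.support, d.degree ≤ a) (hq : ∀ d ∈ q.support, d.degree ≤ a) :
    ∀ d ∈ (p + q).support, d.degree ≤ a := by
  classical
  intro d hd
  rcases Finset.mem_union.mp (MvPolynomial.support_add hd) with h | h
  exacts [hp _ h, hq _ h]

private lemma homog_supp {p : MvPolynomial (Fin n) ℝ} {m : ℕ} (hp : p.IsHomogeneous m) :
    ∀ d ∈ p.support, d.degree = m := by
  intro d hd
  have := hp (mem_support_iff.mp hd)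
  rwa [Finsupp.degree_eq_weight_one]

private lemma smul_supp {p : MvPolynomial (Fin n) ℝ} (c : ℝ) {a : ℕ}
    (hp : ∀ d ∈ p.support, a ≤ d.degree) : ∀ d ∈ ((C c : MvPolynomial (Fin n) ℝ) * p).support, a ≤ d.degree := by
  intro d hd
  apply hp
  have : coeff d (C c * p) ≠ 0 := mem_support_iff.mp hd
  rw [coeff_C_mul] at this
  exact mem_support_iff.mpr fun h => this (by rw [h, mul_zero])

private lemma smul_supp' {p : MvPolynomial (Fin n) ℝ} (c : ℝ) {a : ℕ}
    (hp : ∀ d ∈ p.support, d.degree ≤ a) : ∀ d ∈ ((C c : MvPolynomial (Fin n) ℝ) * p).support, d.degree ≤ a := by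
  intro d hd
  apply hp
  have : coeff d (C c * p) ≠ 0 := mem_support_iff.mp hd
  rw [coeff_C_mul] at this
  exact mem_support_iff.mpr fun h => this (by rw [h, mul_zero])

lemma cube_root_homogeneous {A L : MvPolynomial (Fin n) ℝ}
    (hA : A.IsHomogeneous 3) (hL : L ≠ 0) (h : A = L ^ 3) : L.IsHomogeneous 1 := by
  classical
  set T := L.totalDegree with hT
  set D := (Finset.range (T + 1)).filter (fun i => homogeneousComponent i L ≠ 0) with hDdef
  have hDne : D.Nonempty := by
    rw [Finset.filter_nonempty_iff]
    by_contra hne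
    push_neg at hne
    apply hL
    rw [← sum_homogeneousComponent L]
    exact Finset.sum_eq_zero fun i hi => hne i hi
  -- membership characterization
  have hmemD : ∀ {d : Fin n →₀ ℕ}, coeff d L ≠ 0 → d.degree ∈ D := by
    intro d hd
    rw [hDdef, Finset.mem_filter, Finset.mem_range]
    refine ⟨Nat.lt_succ_of_le (deg_le_total (mem_support_iff.mpr hd)), ?_⟩
    intro hzero
    have h2 := coeff_homogeneousComponent d.degree L d
    rw [hzero] at h2
    simp at h2
    exact hd h2.symm
  -- the key step, done for both min' and max'
  have key : ∀ j ∈ D,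
      (∀ d ∈ (L - homogeneousComponent j L).support, j < d.degree) ∨
      (∀ d ∈ (L - homogeneousComponent j L).support, d.degree < j) → j = 1 := by
    intro j hjD hM
    set Lj := homogeneousComponent j L with hLj
    set M := L - Lj with hMdef
    have hLjne : Lj ≠ 0 := (Finset.mem_filter.mp hjD).2
    have hLjh : Lj.IsHomogeneous j := homogeneousComponent_isHomogeneous j L
    have h3 : (C (3:ℝ) : MvPolynomial (Fin n) ℝ) = 3 := map_ofNat C 3
    set S := M * M + C (3:ℝ) * (M * Lj) + C (3:ℝ) * (Lj * Lj) with hSdef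
    have hG : L ^ 3 - Lj ^ 3 = M * S := by
      rw [hSdef, hMdef, h3]; ring
    have hLjd : ∀ d ∈ Lj.support, d.degree = j := homog_supp hLjh
    -- S has degrees between 2j-ish bounds
    have hSub : ∀ d ∈ S.support, d.degree ≤ 2 * j ∨ True := fun d _ => Or.inr trivial
    have hGne : ∀ d ∈ (M * S).support, d.degree ≠ 3 * j := by
      rcases hM with hlow | hupp
      · have hMlb : ∀ d ∈ M.support, j ≤ d.degree := fun d hd => le_of_lt (hlow d hd)
        have hSlb : ∀ d ∈ S.support, 2 * j ≤ d.degree := by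
          apply supp_add_lb
          apply supp_add_lb
          · have := supp_mul_lb hMlb hMlb
            intro d hd; have := this d hd; omega
          · apply smul_supp
            have := supp_mul_lb hMlb (fun d hd => le_of_eq (hLjd d hd).symm)
            intro d hd; have := this d hd; omega
          · apply smul_supp
            have := supp_mul_lb (fun d hd => le_of_eq (hLjd d hd).symm)
              (fun d hd => le_of_eq (hLjd d hd).symm)
            intro d hd; have := this d hd; omega
        intro d hd
        classical
        obtain ⟨d₁, h1, d₂, h2, rfl⟩ := Finset.mem_add.mp (support_mul M S hd)
        rw [deg_add]
        have := hlow d₁ h1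
        have := hSlb d₂ h2
        omega
      · have hMub : ∀ d ∈ M.support, d.degree ≤ j := fun d hd => le_of_lt (hupp d hd)
        have hSub2 : ∀ d ∈ S.support, d.degree ≤ 2 * j := by
          apply supp_add_ub
          apply supp_add_ub
          · have := supp_mul_ub hMub hMub
            intro d hd; have := this d hd; omega
          · apply smul_supp'
            have := supp_mul_ub hMub (fun d hd => le_of_eq (hLjd d hd))
            intro d hd; have := this d hd; omega
          · apply smul_supp'
            have := supp_mul_ub (fun d hd => le_of_eq (hLjd d hd))
              (fun d hd => le_of_eq (hLjd d hd))
            intro d hd; have := this d hd; omega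
        intro d hd
        classical
        obtain ⟨d₁, h1, d₂, h2, rfl⟩ := Finset.mem_add.mp (support_mul M S hd)
        rw [deg_add]
        have := hupp d₁ h1
        have := hSub2 d₂ h2
        omega
    have hcompMS : homogeneousComponent (3 * j) (M * S) = 0 :=
      homogeneousComponent_eq_zero' _ _ hGne
    have hLj3 : (Lj ^ 3).IsHomogeneous (3 * j) := by
      have := hLjh.pow 3
      rwa [mul_comm] at this
    have hcompL3 : homogeneousComponent (3 * j) (L ^ 3) = Lj ^ 3 := by
      have e : L ^ 3 = Lj ^ 3 + M * S := by rw [← hG]; ring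
      rw [e, map_add, hcompMS, add_zero,
        homogeneousComponent_of_mem ((mem_homogeneousSubmodule _ _).mpr hLj3), if_pos rfl]
    have hcompA : homogeneousComponent (3 * j) A = if 3 * j = 3 then A else 0 :=
      homogeneousComponent_of_mem ((mem_homogeneousSubmodule _ _).mpr hA)
    rw [h, hcompL3] at hcompA
    by_cases h3j : 3 * j = 3
    · omega
    · rw [if_neg h3j] at hcompA
      exact absurd (pow_eq_zero_iff (n := 3) (by norm_num) |>.mp hcompA) hLjne
  have hmin : D.min' hDne = 1 := by
    apply key _ (D.min'_mem hDne)
    left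
    intro d hd
    have hcoeff : coeff d (L - homogeneousComponent (D.min' hDne) L) ≠ 0 :=
      mem_support_iff.mp hd
    rw [coeff_sub, coeff_homogeneousComponent] at hcoeff
    by_cases hdj : d.degree = D.min' hDne
    · rw [if_pos hdj] at hcoeff; simp at hcoeff
    · rw [if_neg hdj, sub_zero] at hcoeff
      have := D.min'_le _ (hmemD hcoeff)
      omega
  have hmax : D.max' hDne = 1 := by
    apply key _ (D.max'_mem hDne)
    right
    intro d hd
    have hcoeff : coeff d (L - homogeneousComponent (D.max' hDne) L) ≠ 0 :=
      mem_support_iff.mp hd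
    rw [coeff_sub, coeff_homogeneousComponent] at hcoeff
    by_cases hdj : d.degree = D.max' hDne
    · rw [if_pos hdj] at hcoeff; simp at hcoeff
    · rw [if_neg hdj, sub_zero] at hcoeff
      have := D.le_max' _ (hmemD hcoeff)
      omega
  have hDone : ∀ i, i ≠ 1 → homogeneousComponent i L = 0 := by
    intro i hi
    by_contra hne
    by_cases hiT : i < T + 1
    · have hiD : i ∈ D := Finset.mem_filter.mpr ⟨Finset.mem_range.mpr hiT, hne⟩
      have h1 := D.min'_le i hiD
      have h2 := D.le_max' i hiD
      omega
    · exact hne (homogeneousComponent_eq_zero _ _ (by omega))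
  have h1T : 1 ∈ Finset.range (T + 1) := by
    have h1D := D.min'_mem hDne
    rw [hmin] at h1D
    exact (Finset.mem_filter.mp h1D).1
  have hLeq : L = homogeneousComponent 1 L := by
    conv_lhs => rw [← sum_homogeneousComponent L]
    exact Finset.sum_eq_single_of_mem 1 h1T (fun i _ hi => hDone i hi)
  rw [hLeq]
  exact homogeneousComponent_isHomogeneous 1 L

end Aux

/-- algebraic core of Theorem 1.1: if `A` is a degree-3 homogeneous
polynomial that is not the cube of a degree-1 homogeneous polynomial, `θ` is a
degree-1 homogeneous polynomial, and `θ(y)·A(y)^(1/3) + μ·A(y)^(2/3)` agrees with a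
rational function `P/Q` on a nonempty open set where `A > 0` and `Q ≠ 0`, then
`θ = 0` and `μ = 0`. -/
theorem mth_root_irrationality (n : ℕ) (hn : 1 ≤ n)
    (A θ P Q : MvPolynomial (Fin n) ℝ)
    (hA3 : A.IsHomogeneous 3)
    (hAnc : ¬ ∃ L : MvPolynomial (Fin n) ℝ, L.IsHomogeneous 1 ∧ A = L ^ 3)
    (hθ1 : θ.IsHomogeneous 1) (μ : ℝ)
    (U : Set (Fin n → ℝ)) (hUopen : IsOpen U) (hUne : U.Nonempty)
    (hApos : ∀ y ∈ U, 0 < eval y A)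
    (hQne : ∀ y ∈ U, eval y Q ≠ 0)
    (heq : ∀ y ∈ U,
      eval y θ * (eval y A) ^ ((1 : ℝ) / 3) + μ * (eval y A) ^ ((2 : ℝ) / 3)
        = eval y P / eval y Q) :
    θ = 0 ∧ μ = 0 := by
  classical
  obtain ⟨y₀, hy₀⟩ := hUne
  set a : MvPolynomial (Fin n) ℝ := MvPolynomial.C μ * Q with hadef
  set b : MvPolynomial (Fin n) ℝ := θ * Q with hbdef
  set c : MvPolynomial (Fin n) ℝ := -P with hcdef
  set E : MvPolynomial (Fin n) ℝ := a^3 * A^2 + b^3 * A + c^3 - 3 * (a * b * c * A) with hEdef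
  have hEzero : E = 0 := by
    apply eq_zero_of_eval_zero_on_open E hUopen ⟨y₀, hy₀⟩
    intro y hy
    have hQ := hQne y hy
    have hApos' := hApos y hy
    set t : ℝ := (eval y A) ^ ((1:ℝ)/3) with htdef
    have ht3 : t ^ 3 = eval y A := by
      rw [htdef, ← Real.rpow_natCast _ 3, ← Real.rpow_mul hApos'.le]
      norm_num
    have ht2 : (eval y A) ^ ((2:ℝ)/3) = t ^ 2 := by
      rw [htdef, ← Real.rpow_natCast _ 2, ← Real.rpow_mul hApos'.le]
      norm_num
    have h1 : eval y θ * t + μ * t ^ 2 = eval y P / eval y Q := by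
      have h0 := heq y hy
      rw [ht2, ← htdef] at h0
      exact h0
    have h2 : μ * eval y Q * t ^ 2 + eval y θ * eval y Q * t + (- eval y P) = 0 := by
      have h2' : (eval y θ * t + μ * t ^ 2) * eval y Q = eval y P := by
        rw [h1]; field_simp
      linear_combination h2'
    have hE : eval y E = 0 := by
      simp only [hEdef, hadef, hbdef, hcdef, map_sub, map_add, map_mul, map_pow,
        map_neg, eval_C, map_ofNat]
      rw [← ht3]
      linear_combination ((μ * eval y Q)^2*t^4 - (μ * eval y Q)*(eval y θ * eval y Q)*t^3
        + (eval y θ * eval y Q)^2*t^2 - (μ * eval y Q)*(- eval y P)*t^2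
        - (eval y θ * eval y Q)*(- eval y P)*t + (- eval y P)^2) * h2
    exact hE
  set F := FractionRing (MvPolynomial (Fin n) ℝ) with hFdef
  set f : MvPolynomial (Fin n) ℝ →+* F := algebraMap (MvPolynomial (Fin n) ℝ) F with hfdef
  have hfinj : Function.Injective f := IsFractionRing.injective _ _
  have hAne : A ≠ 0 := by
    intro h0
    have := hApos y₀ hy₀
    rw [h0] at this
    simp at this
  have hnocube : ∀ s : F, s ^ 3 ≠ f A := by
    intro s hs
    have hint : IsIntegral (MvPolynomial (Fin n) ℝ) s := by
      refine ⟨Polynomial.X ^ 3 - Polynomial.C A, Polynomial.monic_X_pow_sub_C _ (by norm_num), ?_⟩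
      simp only [Polynomial.eval₂_sub, Polynomial.eval₂_pow, Polynomial.eval₂_X,
        Polynomial.eval₂_C, hs]
      exact sub_self _
    obtain ⟨L, hL⟩ := IsIntegrallyClosed.isIntegral_iff.mp hint
    have hcube : L ^ 3 = A := by
      apply hfinj
      rw [map_pow]
      rw [show f L = s from hL, hs]
    have hLne : L ≠ 0 := by
      rintro rfl
      rw [zero_pow (by norm_num)] at hcube
      exact hAne hcube.symm
    exact hAnc ⟨L, cube_root_homogeneous hA3 hLne hcube.symm, hcube.symm⟩
  have hfeq : (f a)^3 * (f A)^2 + (f b)^3 * (f A) + (f c)^3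
      = 3 * (f a) * (f b) * (f c) * (f A) := by
    have h0 := congrArg f hEzero
    simp only [hEdef, map_sub, map_add, map_mul, map_pow, map_zero, map_ofNat] at h0
    linear_combination h0
  obtain ⟨ha0, hb0, hc0⟩ := cube_norm_zero hnocube hfeq
  have hQ0 : Q ≠ 0 := by
    intro h0
    apply hQne y₀ hy₀
    rw [h0, map_zero]
  have haR : MvPolynomial.C μ * Q = 0 := by
    apply hfinj
    rw [map_zero, ← hadef]
    exact ha0
  have hbR : θ * Q = 0 := by
    apply hfinj
    rw [map_zero, ← hbdef]
    exact hb0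
  constructor
  · rcases mul_eq_zero.mp hbR with h | h
    · exact h
    · exact absurd h hQ0
  · rcases mul_eq_zero.mp haR with h | h
    · exact (MvPolynomial.C_eq_zero).mp h
    · exact absurd h hQ0
end
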